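/- arXiv:2207.12486 — 6 statements merged into one kernel-verified Lean document; each statement's English description precedes it below -/
import Mathlib

section
/- Let ρ₁, ρ₂ > 0 with ρ₁ ≠ ρ₂ and let t_s ∈ (0,1). Define λ_eq = (ρ₁ − ρ₂ + ρ₂·e^{ρ₁ t_s} − ρ₁·e^{ρ₂(t_s−1)}) / (ρ₁ρ₂·e^{ρ₂(t_s−1)} − ρ₁ρ₂·e^{ρ₁ t_s}). Then λ_eq < 0. -/
/-- λ_eq < 0. -/
theorem stmt_1 (ρ₁ ρ₂ ts : ℝ) (h₁ : 0 < ρ₁) (h₂ : 0 < ρ₂) (hne : ρ₁ ≠ ρ₂)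
    (hts : ts ∈ Set.Ioo (0:ℝ) 1) :
    (ρ₁ - ρ₂ + ρ₂ * Real.exp (ρ₁ * ts) - ρ₁ * Real.exp (ρ₂ * (ts - 1))) /
      (ρ₁ * ρ₂ * Real.exp (ρ₂ * (ts - 1)) - ρ₁ * ρ₂ * Real.exp (ρ₁ * ts)) < 0 := by
  obtain ⟨hts0, hts1⟩ := hts
  have hA : 1 + ρ₁ * ts < Real.exp (ρ₁ * ts) := by
    have := Real.add_one_lt_exp (x := ρ₁ * ts) (by positivity)
    linarith
  have hB : Real.exp (ρ₂ * (ts - 1)) < 1 := by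
    apply Real.exp_lt_one_iff.mpr
    nlinarith
  apply div_neg_of_pos_of_neg
  · nlinarith [mul_lt_mul_of_pos_left hA h₂, mul_lt_mul_of_pos_left hB h₁,
      mul_pos (mul_pos h₂ h₁) hts0]
  · have h1 : 1 < Real.exp (ρ₁ * ts) := by nlinarith [mul_pos h₁ hts0]
    nlinarith [mul_lt_mul_of_pos_left (hB.trans h1) (mul_pos h₁ h₂)]
end

section
/- Let ρ₁, ρ₂ > 0 with ρ₁ < ρ₂, and t_s ∈ (0,1). Define g(t_s) = 1/ρ₂ + ((ρ₂ − ρ₁)/(ρ₁ρ₂)) · (e^{ρ₁ t_s} − 1)/(e^{ρ₁ t_s} − e^{ρ₂(t_s − 1)}). Then for all t_s ∈ (0,1): 1/ρ₂ < g(t_s) < 1/ρ₁. -/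
/-- Bounds on the extreme value of the periodic adjoint trajectory, case ρ₁ < ρ₂. -/
theorem stmt_9 (ρ₁ ρ₂ ts : ℝ) (h₁ : 0 < ρ₁) (h₂ : 0 < ρ₂) (hlt : ρ₁ < ρ₂)
    (hts : ts ∈ Set.Ioo (0:ℝ) 1) :
    1/ρ₂ < 1/ρ₂ + (ρ₂ - ρ₁) / (ρ₁ * ρ₂) *
        ((Real.exp (ρ₁ * ts) - 1) / (Real.exp (ρ₁ * ts) - Real.exp (ρ₂ * (ts - 1)))) ∧
    1/ρ₂ + (ρ₂ - ρ₁) / (ρ₁ * ρ₂) *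
        ((Real.exp (ρ₁ * ts) - 1) / (Real.exp (ρ₁ * ts) - Real.exp (ρ₂ * (ts - 1)))) < 1/ρ₁ := by
  obtain ⟨hts0, hts1⟩ := hts
  have hA : 1 < Real.exp (ρ₁ * ts) := by
    rw [show (1:ℝ) = Real.exp 0 by simp]
    exact Real.exp_lt_exp.mpr (by positivity)
  have hB : Real.exp (ρ₂ * (ts - 1)) < 1 := by
    have : ρ₂ * (ts - 1) < 0 := by nlinarith
    calc Real.exp (ρ₂ * (ts - 1)) < Real.exp 0 := Real.exp_lt_exp.mpr this
      _ = 1 := Real.exp_zero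
  have hden : 0 < Real.exp (ρ₁ * ts) - Real.exp (ρ₂ * (ts - 1)) := by linarith
  have hr : 0 < (Real.exp (ρ₁ * ts) - 1) / (Real.exp (ρ₁ * ts) - Real.exp (ρ₂ * (ts - 1))) :=
    div_pos (by linarith) hden
  have hr1 : (Real.exp (ρ₁ * ts) - 1) / (Real.exp (ρ₁ * ts) - Real.exp (ρ₂ * (ts - 1))) < 1 :=
    (div_lt_one hden).mpr (by linarith)
  have hc : 0 < (ρ₂ - ρ₁) / (ρ₁ * ρ₂) := div_pos (by linarith) (by positivity)
  constructor
  · nlinarith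
  · have hcc : (ρ₂ - ρ₁) / (ρ₁ * ρ₂) = 1/ρ₁ - 1/ρ₂ := by
      field_simp
    nlinarith [mul_lt_mul_of_pos_left hr1 hc]
end

section
/- Let ρ₁, ρ₂ > 0, ρ₁ ≠ ρ₂, t_s ∈ (0,1), and β > 0 with β ≤ min(ρ₁, ρ₂). If ρ₁ < ρ₂, then 1/ρ₂ + ((ρ₂ − ρ₁)/(ρ₁ρ₂))·(e^{ρ₁ t_s} − 1)/(e^{ρ₁ t_s} − e^{ρ₂(t_s − 1)}) ≤ 1/β. -/
/-- Sustainability condition, case ρ₁ < ρ₂. -/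
theorem stmt_10 (ρ₁ ρ₂ ts β : ℝ) (h₁ : 0 < ρ₁) (h₂ : 0 < ρ₂) (hne : ρ₁ ≠ ρ₂)
    (hts : ts ∈ Set.Ioo (0:ℝ) 1) (hβ : 0 < β) (hβle : β ≤ min ρ₁ ρ₂)
    (hlt : ρ₁ < ρ₂) :
    1/ρ₂ + (ρ₂ - ρ₁) / (ρ₁ * ρ₂) *
        ((Real.exp (ρ₁ * ts) - 1) / (Real.exp (ρ₁ * ts) - Real.exp (ρ₂ * (ts - 1)))) ≤ 1/β := by
  obtain ⟨hts0, hts1⟩ := hts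
  have he1 : Real.exp (ρ₂ * (ts - 1)) < 1 := by
    rw [Real.exp_lt_one_iff]
    nlinarith
  have he2 : (1:ℝ) ≤ Real.exp (ρ₁ * ts) := by
    rw [Real.one_le_exp_iff]
    positivity
  have hD : 0 < Real.exp (ρ₁ * ts) - Real.exp (ρ₂ * (ts - 1)) := by linarith
  have hF : (Real.exp (ρ₁ * ts) - 1) / (Real.exp (ρ₁ * ts) - Real.exp (ρ₂ * (ts - 1))) ≤ 1 := by
    rw [div_le_one hD]; linarith
  have hFpos : 0 ≤ (Real.exp (ρ₁ * ts) - 1) / (Real.exp (ρ₁ * ts) - Real.exp (ρ₂ * (ts - 1))) := by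
    apply div_nonneg <;> linarith
  have hcoef : 0 ≤ (ρ₂ - ρ₁) / (ρ₁ * ρ₂) := by apply div_nonneg <;> nlinarith
  have hmul : (ρ₂ - ρ₁) / (ρ₁ * ρ₂) *
      ((Real.exp (ρ₁ * ts) - 1) / (Real.exp (ρ₁ * ts) - Real.exp (ρ₂ * (ts - 1)))) ≤
      (ρ₂ - ρ₁) / (ρ₁ * ρ₂) := by
    nlinarith
  have hβ1 : β ≤ ρ₁ := le_trans hβle (min_le_left _ _)
  have h1 : 1/ρ₁ ≤ 1/β := one_div_le_one_div_of_le hβ hβ1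
  have key : 1/ρ₂ + (ρ₂ - ρ₁) / (ρ₁ * ρ₂) = 1/ρ₁ := by
    field_simp; ring
  linarith
end

section
/- Let ρ₁, ρ₂ > 0, ρ₁ > ρ₂, t_s ∈ (0,1), and β > 0 with β ≤ min(ρ₁, ρ₂) = ρ₂. Then 1/ρ₁ + ((ρ₂ − ρ₁)/(ρ₁ρ₂))·(e^{ρ₁ t_s}(e^{ρ₂(t_s − 1)} − 1))/(e^{ρ₁ t_s} − e^{ρ₂(t_s − 1)}) ≤ 1/β. -/
/-- Sustainability condition, case ρ₁ > ρ₂. -/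
theorem stmt_11 (ρ₁ ρ₂ ts β : ℝ) (h₁ : 0 < ρ₁) (h₂ : 0 < ρ₂) (hgt : ρ₁ > ρ₂)
    (hts : ts ∈ Set.Ioo (0:ℝ) 1) (hβ : 0 < β) (hβle : β ≤ min ρ₁ ρ₂) :
    1/ρ₁ + (ρ₂ - ρ₁) / (ρ₁ * ρ₂) *
        ((Real.exp (ρ₁ * ts) * (Real.exp (ρ₂ * (ts - 1)) - 1)) /
          (Real.exp (ρ₁ * ts) - Real.exp (ρ₂ * (ts - 1)))) ≤ 1/β := by
  obtain ⟨hts0, hts1⟩ := hts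
  set A := Real.exp (ρ₁ * ts) with hAdef
  set B := Real.exp (ρ₂ * (ts - 1)) with hBdef
  have hA : 1 < A := by
    rw [hAdef, show (1:ℝ) = Real.exp 0 by simp]
    exact Real.exp_lt_exp.mpr (by positivity)
  have hB1 : B < 1 := by
    rw [hBdef]
    exact Real.exp_lt_one_iff.mpr (by nlinarith)
  have hB0 : 0 < B := Real.exp_pos _
  have hAB : 0 < A - B := by linarith
  have key : 1/ρ₁ + (ρ₂ - ρ₁) / (ρ₁ * ρ₂) * (A * (B - 1) / (A - B)) ≤ 1/ρ₂ := by
    have heq : 1/ρ₂ - (1/ρ₁ + (ρ₂ - ρ₁) / (ρ₁ * ρ₂) * (A * (B - 1) / (A - B)))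
        = ((ρ₁ - ρ₂) * B * (A - 1)) / (ρ₁ * ρ₂ * (A - B)) := by
      field_simp
      ring
    have hnn : 0 ≤ ((ρ₁ - ρ₂) * B * (A - 1)) / (ρ₁ * ρ₂ * (A - B)) := by
      apply div_nonneg
      · exact mul_nonneg (mul_nonneg (by linarith) hB0.le) (by linarith)
      · positivity
    linarith [heq ▸ hnn]
  have hβ₂ : β ≤ ρ₂ := le_trans hβle (min_le_right _ _)
  calc 1/ρ₁ + (ρ₂ - ρ₁) / (ρ₁ * ρ₂) * (A * (B - 1) / (A - B)) ≤ 1/ρ₂ := key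
    _ ≤ 1/β := one_div_le_one_div_of_le hβ hβ₂
end

section
/- Let ρ₁ < ρ₂ be positive reals and for t_s ∈ (0,1) define g(t_s) = 1/ρ₂ + ((ρ₂ − ρ₁)/(ρ₁ρ₂))·(e^{ρ₁ t_s} − 1)/(e^{ρ₁ t_s} − e^{ρ₂(t_s − 1)}). Then g extends continuously to [0,1] with g(0) = 1/ρ₂ and g(1) = 1/ρ₁, and g is strictly monotone increasing on [0,1]. -/
/-!
With `a t = exp (ρ₁ t)` and `b t = exp (ρ₂ (t - 1))`, both increasing, `g` is an affine image
with positive slope of `(a - 1) / (a - b)`, whose denominator stays positive on `[0, 1]`.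
Cross-multiplying, `(a₁ - 1) / (a₁ - b₁) < (a₂ - 1) / (a₂ - b₂)` becomes
`0 < (a₂ - a₁) (1 - b₁) + (a₁ - 1) (b₂ - b₁)`, which holds because `a ≥ 1`, and `b < 1`
away from `t = 1`.
-/

open Real Set

lemma sub_one_div_sub_lt_sub_one_div_sub {a₁ a₂ b₁ b₂ : ℝ} (ha₁ : 1 ≤ a₁) (ha : a₁ < a₂)
    (hb : b₁ ≤ b₂) (hb₁ : b₁ < 1) (hb₂ : b₂ < a₂) :
    (a₁ - 1) / (a₁ - b₁) < (a₂ - 1) / (a₂ - b₂) := by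
  rw [div_lt_div_iff₀ (by linarith) (by linarith)]
  nlinarith [mul_pos (sub_pos.2 ha) (sub_pos.2 hb₁),
    mul_nonneg (sub_nonneg.2 ha₁) (sub_nonneg.2 hb)]

noncomputable def switchingRatio (ρ₁ ρ₂ t : ℝ) : ℝ :=
  (exp (ρ₁ * t) - 1) / (exp (ρ₁ * t) - exp (ρ₂ * (t - 1)))

section switchingRatio

variable {ρ₁ ρ₂ : ℝ}

lemma exp_mul_sub_one_lt_exp_mul (h₁ : 0 < ρ₁) (h₂ : 0 < ρ₂) {t : ℝ} (ht : t ∈ Icc 0 1) :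
    exp (ρ₂ * (t - 1)) < exp (ρ₁ * t) := by
  obtain ⟨ht₀, ht₁⟩ := ht
  rw [exp_lt_exp]
  rcases ht₀.eq_or_lt with rfl | ht₀
  · linarith
  · nlinarith

lemma continuousOn_switchingRatio (h₁ : 0 < ρ₁) (h₂ : 0 < ρ₂) :
    ContinuousOn (switchingRatio ρ₁ ρ₂) (Icc 0 1) := by
  refine ContinuousOn.div (by fun_prop) (by fun_prop) fun t ht => ?_
  exact (sub_pos.2 (exp_mul_sub_one_lt_exp_mul h₁ h₂ ht)).ne'

lemma switchingRatio_zero : switchingRatio ρ₁ ρ₂ 0 = 0 := by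
  simp [switchingRatio]

lemma switchingRatio_one (h₁ : ρ₁ ≠ 0) : switchingRatio ρ₁ ρ₂ 1 = 1 := by
  have : exp ρ₁ - 1 ≠ 0 := sub_ne_zero.2 (mt (exp_eq_one_iff ρ₁).1 h₁)
  simp [switchingRatio, this]

lemma strictMonoOn_switchingRatio (h₁ : 0 < ρ₁) (h₂ : 0 < ρ₂) :
    StrictMonoOn (switchingRatio ρ₁ ρ₂) (Icc 0 1) := by
  intro x hx y hy hxy
  refine sub_one_div_sub_lt_sub_one_div_sub (one_le_exp (by nlinarith [hx.1]))
    (exp_lt_exp.2 (by nlinarith)) (exp_le_exp.2 (by nlinarith))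
    (exp_lt_one_iff.2 (by nlinarith [hy.2])) (exp_mul_sub_one_lt_exp_mul h₁ h₂ hy)

end switchingRatio

/-- g extends continuously to [0,1] with g(0)=1/ρ₂, g(1)=1/ρ₁, and is strictly increasing. -/
theorem stmt_12 (ρ₁ ρ₂ : ℝ) (h₁ : 0 < ρ₁) (h₂ : 0 < ρ₂) (hlt : ρ₁ < ρ₂)
    (g : ℝ → ℝ)
    (hg : ∀ ts : ℝ, g ts = 1/ρ₂ + (ρ₂ - ρ₁) / (ρ₁ * ρ₂) *
        ((Real.exp (ρ₁ * ts) - 1) / (Real.exp (ρ₁ * ts) - Real.exp (ρ₂ * (ts - 1))))) :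
    ContinuousOn g (Set.Icc 0 1) ∧ g 0 = 1/ρ₂ ∧ g 1 = 1/ρ₁ ∧
      StrictMonoOn g (Set.Icc 0 1) := by
  obtain rfl : g = fun t => 1 / ρ₂ + (ρ₂ - ρ₁) / (ρ₁ * ρ₂) * switchingRatio ρ₁ ρ₂ t :=
    funext hg
  have hslope : 0 < (ρ₂ - ρ₁) / (ρ₁ * ρ₂) := div_pos (sub_pos.2 hlt) (mul_pos h₁ h₂)
  refine ⟨continuousOn_const.add (continuousOn_const.mul (continuousOn_switchingRatio h₁ h₂)),
    ?_, ?_, ?_⟩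
  · simp [switchingRatio_zero]
  · simp only [switchingRatio_one h₁.ne']
    field_simp
    ring
  · intro x hx y hy hxy
    have hratio := strictMonoOn_switchingRatio h₁ h₂ hx hy hxy
    dsimp only
    gcongr
end

section
/- Let λ_eq be defined as in the paper for ρ₁, ρ₂ > 0, ρ₁ ≠ ρ₂, t_s ∈ (0,1), and λ(t_s) = (λ_eq + 1/ρ₁)e^{ρ₁ t_s} − 1/ρ₁. If ρ₁ < ρ₂, then λ_eq < λ(t_s) < 0, i.e., the adjoint variable increases on the first subinterval and both extremes are negative. -/
/-!
Write `A = exp (ρ₁ t_s) > 1` and `B = exp (ρ₂ (t_s - 1)) ∈ (0, 1)`. Then `λ_eq = c - 1/ρ₁` and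
`λ(t_s) = c A - 1/ρ₁` with `c = (ρ₂ - ρ₁)(1 - B) / (ρ₁ ρ₂ (A - B))`. For `ρ₁ < ρ₂` the constant `c`
is positive, so `λ_eq < λ(t_s)` because `A > 1`; and `c A < 1/ρ₁` amounts to
`ρ₁ A (1 - B) + ρ₂ B (A - 1) > 0`, so `λ(t_s) < 0`.
-/

namespace PeriodicAdjoint

/-- The constant `λ_eq + 1/ρ₁`, in terms of `A = exp (ρ₁ t_s)` and `B = exp (ρ₂ (t_s - 1))`. -/
noncomputable def amplitude (ρ₁ ρ₂ A B : ℝ) : ℝ :=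
  (ρ₂ - ρ₁) * (1 - B) / (ρ₁ * ρ₂ * (A - B))

variable {ρ₁ ρ₂ A B : ℝ}

theorem eq_amplitude_sub_inv (h₁ : ρ₁ ≠ 0) (h₂ : ρ₂ ≠ 0) (hAB : A ≠ B) :
    (ρ₁ - ρ₂ + ρ₂ * A - ρ₁ * B) / (ρ₁ * ρ₂ * B - ρ₁ * ρ₂ * A) = amplitude ρ₁ ρ₂ A B - 1 / ρ₁ := by
  have hBA : B - A ≠ 0 := sub_ne_zero.mpr hAB.symm
  have hAB' : A - B ≠ 0 := sub_ne_zero.mpr hAB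
  rw [amplitude, show ρ₁ * ρ₂ * B - ρ₁ * ρ₂ * A = ρ₁ * ρ₂ * (B - A) by ring]
  field_simp
  ring

theorem amplitude_pos (h₁ : 0 < ρ₁) (h₂ : 0 < ρ₂) (hlt : ρ₁ < ρ₂) (hB : B < 1) (hBA : B < A) :
    0 < amplitude ρ₁ ρ₂ A B := by
  unfold amplitude
  have := sub_pos.mpr hBA
  have := sub_pos.mpr hB
  have := sub_pos.mpr hlt
  positivity

theorem amplitude_mul_lt_inv (h₁ : 0 < ρ₁) (h₂ : 0 < ρ₂) (hA : 1 < A) (hB₀ : 0 < B)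
    (hB : B < 1) : amplitude ρ₁ ρ₂ A B * A < 1 / ρ₁ := by
  have hden : 0 < ρ₁ * ρ₂ * (A - B) := by
    have := sub_pos.mpr (hB.trans hA)
    positivity
  rw [amplitude, div_mul_eq_mul_div, div_lt_div_iff₀ hden h₁]
  nlinarith [mul_pos (mul_pos h₁ (by linarith : (0 : ℝ) < A)) (sub_pos.mpr hB),
    mul_pos (mul_pos h₂ hB₀) (sub_pos.mpr hA)]

end PeriodicAdjoint

open PeriodicAdjoint in
/-- Case ρ₁ < ρ₂: the adjoint increases on the first subinterval and stays negative. -/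
theorem stmt_13 (ρ₁ ρ₂ ts : ℝ) (h₁ : 0 < ρ₁) (h₂ : 0 < ρ₂) (hlt : ρ₁ < ρ₂)
    (hts : ts ∈ Set.Ioo (0:ℝ) 1)
    (lamEq lamTs : ℝ)
    (hEq : lamEq =
      (ρ₁ - ρ₂ + ρ₂ * Real.exp (ρ₁ * ts) - ρ₁ * Real.exp (ρ₂ * (ts - 1))) /
        (ρ₁ * ρ₂ * Real.exp (ρ₂ * (ts - 1)) - ρ₁ * ρ₂ * Real.exp (ρ₁ * ts)))
    (hTs : lamTs = (lamEq + 1/ρ₁) * Real.exp (ρ₁ * ts) - 1/ρ₁) :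
    lamEq < lamTs ∧ lamTs < 0 := by
  obtain ⟨hts₀, hts₁⟩ := hts
  set A := Real.exp (ρ₁ * ts)
  set B := Real.exp (ρ₂ * (ts - 1))
  have hA : 1 < A := Real.one_lt_exp_iff.mpr (by positivity)
  have hB₀ : 0 < B := Real.exp_pos _
  have hB : B < 1 := Real.exp_lt_one_iff.mpr (mul_neg_of_pos_of_neg h₂ (by linarith))
  rw [eq_amplitude_sub_inv h₁.ne' h₂.ne' (hB.trans hA).ne'] at hEq
  rw [hEq, sub_add_cancel] at hTs
  have hc := amplitude_pos h₁ h₂ hlt hB (hB.trans hA)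
  constructor
  · rw [hEq, hTs]
    linarith [mul_lt_mul_of_pos_left hA hc]
  · rw [hTs]
    linarith [amplitude_mul_lt_inv (ρ₂ := ρ₂) h₁ h₂ hA hB₀ hB]
end
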